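/- arXiv:2205.13085 — 4 statements merged into one kernel-verified Lean document; each statement's English description precedes it below -/
import Mathlib

section
/- Suppose π : ℝ² → ℝ satisfies both of the following decompositions: (forward heteroscedastic noise model in log form) π(x,y) = ν((y − m(x))/σ(x)) + ξ(x) for all (x,y), where ν : ℝ → ℝ is twice differentiable, ξ : ℝ → ℝ is arbitrary, and m, σ : ℝ → ℝ are differentiable with σ(x) > 0 for all x; (backward heteroscedastic noise model in log form) π(x,y) = r(x,y) + q(y) for all (x,y), where r : ℝ² → ℝ is twice continuously differentiable and q : ℝ → ℝ is twice differentiable. Then at every point (x,y) with Q(x,y) ≠ 0, the differential equation −(σ(x)/Q(x,y))·∂²r/∂x∂y(x,y) − ∂²r/∂y²(x,y) − (σ'(x)/Q(x,y))·∂r/∂y(x,y) = q''(y) + (σ'(x)/Q(x,y))·q'(y) holds. -/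
/-- **Identifiability differential equation for the heteroscedastic noise model.**
If the log joint density `π` admits both a forward HNM decomposition
`π x y = ν ((y - m x)/σ x) + ξ x` and a backward HNM decomposition
`π x y = r x y + q y`, then at every point where
`Q x y = σ x * m' x + (y - m x) * σ' x ≠ 0` the differential equation
`-(σ x / Q x y) ∂²r/∂x∂y - ∂²r/∂y² - (σ' x / Q x y) ∂r/∂y
  = q'' y + (σ' x / Q x y) q' y` holds. -/
theorem hnm_identifiability_ode
    (π : ℝ → ℝ → ℝ) (ν ξ m σ q : ℝ → ℝ) (r : ℝ → ℝ → ℝ)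
    (hν : Differentiable ℝ ν) (hν' : Differentiable ℝ (deriv ν))
    (hm : Differentiable ℝ m) (hσ : Differentiable ℝ σ)
    (hσpos : ∀ x, 0 < σ x)
    (hforward : ∀ x y, π x y = ν ((y - m x) / σ x) + ξ x)
    (hr : ContDiff ℝ 2 (fun p : ℝ × ℝ => r p.1 p.2))
    (hq : Differentiable ℝ q) (hq' : Differentiable ℝ (deriv q))
    (hbackward : ∀ x y, π x y = r x y + q y)
    (Q : ℝ → ℝ → ℝ)
    (hQ : ∀ x y, Q x y = σ x * deriv m x + (y - m x) * deriv σ x) :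
    ∀ x y, Q x y ≠ 0 →
      -(σ x / Q x y) * deriv (fun x' => deriv (fun y' => r x' y') y) x
        - deriv (fun y' => deriv (fun y'' => r x y'') y') y
        - (deriv σ x / Q x y) * deriv (fun y' => r x y') y
      = deriv (deriv q) y + (deriv σ x / Q x y) * deriv q y := by
  intro x y hQne
  have hσne : ∀ a, σ a ≠ 0 := fun a => (hσpos a).ne'
  -- explicit formula for r
  have hrdef : ∀ a b, r a b = ν ((b - m a) / σ a) + ξ a - q b := by
    intro a b
    have h := (hforward a b).symm.trans (hbackward a b)
    linarith
  -- first partial derivative in y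
  have hA : ∀ a b, deriv (fun y' => r a y') b
      = deriv ν ((b - m a) / σ a) / σ a - deriv q b := by
    intro a b
    have h1 : HasDerivAt (fun y' : ℝ => (y' - m a) / σ a) (1 / σ a) b := by
      simpa using ((hasDerivAt_id b).sub_const (m a)).div_const (σ a)
    have h2 : HasDerivAt (fun y' : ℝ => ν ((y' - m a) / σ a))
        (deriv ν ((b - m a) / σ a) * (1 / σ a)) b :=
      (hν ((b - m a) / σ a)).hasDerivAt.comp b h1
    have h3 : HasDerivAt (fun y' : ℝ => ν ((y' - m a) / σ a) + ξ a - q y')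
        (deriv ν ((b - m a) / σ a) * (1 / σ a) - deriv q b) b :=
      (h2.add_const (ξ a)).sub (hq b).hasDerivAt
    have hfun : (fun y' => r a y') = fun y' => ν ((y' - m a) / σ a) + ξ a - q y' := by
      funext y'; exact hrdef a y'
    rw [hfun, h3.deriv]
    field_simp
  set z := (y - m x) / σ x with hz
  -- second partial derivative in y
  have hB : deriv (fun y' => deriv (fun y'' => r x y'') y') y
      = deriv (deriv ν) z * (1 / σ x) / σ x - deriv (deriv q) y := by
    have hfun : (fun y' => deriv (fun y'' => r x y'') y')
        = fun y' => deriv ν ((y' - m x) / σ x) / σ x - deriv q y' := by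
      funext y'; exact hA x y'
    have h1 : HasDerivAt (fun y' : ℝ => (y' - m x) / σ x) (1 / σ x) y := by
      simpa using ((hasDerivAt_id y).sub_const (m x)).div_const (σ x)
    have h2 : HasDerivAt (fun y' : ℝ => deriv ν ((y' - m x) / σ x))
        (deriv (deriv ν) z * (1 / σ x)) y :=
      by have := (hν' z).hasDerivAt.comp y h1; exact this
    have h3 : HasDerivAt
        (fun y' : ℝ => deriv ν ((y' - m x) / σ x) / σ x - deriv q y')
        (deriv (deriv ν) z * (1 / σ x) / σ x - deriv (deriv q) y) y :=
      (h2.div_const (σ x)).sub (hq' y).hasDerivAt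
    rw [hfun, h3.deriv]
  -- mixed partial derivative
  have hC : deriv (fun x' => deriv (fun y' => r x' y') y) x
      = ((deriv (deriv ν) z * (((-deriv m x) * σ x - (y - m x) * deriv σ x) / σ x ^ 2))
            * σ x - deriv ν z * deriv σ x) / σ x ^ 2 := by
    have hfun : (fun x' => deriv (fun y' => r x' y') y)
        = fun x' => deriv ν ((y - m x') / σ x') / σ x' - deriv q y := by
      funext x'; exact hA x' y
    have hnum : HasDerivAt (fun x' : ℝ => y - m x') (-deriv m x) x := by
      exact (hm x).hasDerivAt.const_sub y
    have h1 : HasDerivAt (fun x' : ℝ => (y - m x') / σ x')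
        (((-deriv m x) * σ x - (y - m x) * deriv σ x) / σ x ^ 2) x :=
      hnum.div (hσ x).hasDerivAt (hσne x)
    have h2 : HasDerivAt (fun x' : ℝ => deriv ν ((y - m x') / σ x'))
        (deriv (deriv ν) z * (((-deriv m x) * σ x - (y - m x) * deriv σ x) / σ x ^ 2)) x :=
      by have := (hν' z).hasDerivAt.comp x h1; exact this
    have h3 : HasDerivAt
        (fun x' : ℝ => deriv ν ((y - m x') / σ x') / σ x' - deriv q y)
        (((deriv (deriv ν) z * (((-deriv m x) * σ x - (y - m x) * deriv σ x) / σ x ^ 2))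
            * σ x - deriv ν z * deriv σ x) / σ x ^ 2 - 0) x :=
      ((h2.div (hσ x).hasDerivAt (hσne x)).sub (hasDerivAt_const x (deriv q y)))
    rw [hfun, h3.deriv, sub_zero]
  rw [hQ] at hQne
  rw [hB, hC, hA x y, ← hz, hQ]
  set A := deriv (deriv ν) z
  set B := deriv ν z
  set M := deriv m x
  set S := deriv σ x
  set Q1 := deriv q y
  set Q2 := deriv (deriv q) y
  have hσx := hσne x
  field_simp
  ring
end

section
/- Let G, H : ℝ → ℝ be continuous and let q₁, q₂ : ℝ → ℝ be twice differentiable functions satisfying qᵢ''(y) = qᵢ'(y)·G(y) + H(y) for all y ∈ ℝ (i = 1, 2). Suppose q₁'(y₀) = q₂'(y₀) for some y₀ ∈ ℝ, and suppose the functions y ↦ exp(q₁(y)) and y ↦ exp(q₂(y)) are both integrable over ℝ with ∫_ℝ exp(q₁(y)) dy = ∫_ℝ exp(q₂(y)) dy = 1. Then q₁ = q₂. -/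
open MeasureTheory

/-- **The density `p_Y = e^q` is completely determined by `(y₀, q'(y₀))`.**
If `q₁, q₂` are twice differentiable, both satisfy the linear ODE
`q'' = q'·G + H`, their derivatives agree at `y₀`, and both `exp ∘ q₁` and
`exp ∘ q₂` are probability densities on `ℝ`, then `q₁ = q₂`. -/
theorem log_density_determined
    (G H : ℝ → ℝ) (hG : Continuous G) (hH : Continuous H)
    (q₁ q₂ : ℝ → ℝ)
    (hq₁ : Differentiable ℝ q₁) (hq₁' : Differentiable ℝ (deriv q₁))
    (hq₂ : Differentiable ℝ q₂) (hq₂' : Differentiable ℝ (deriv q₂))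
    (hode₁ : ∀ y, deriv (deriv q₁) y = deriv q₁ y * G y + H y)
    (hode₂ : ∀ y, deriv (deriv q₂) y = deriv q₂ y * G y + H y)
    (y₀ : ℝ) (h0 : deriv q₁ y₀ = deriv q₂ y₀)
    (hint₁ : Integrable (fun y => Real.exp (q₁ y)))
    (hint₂ : Integrable (fun y => Real.exp (q₂ y)))
    (hnorm₁ : ∫ y, Real.exp (q₁ y) = 1)
    (hnorm₂ : ∫ y, Real.exp (q₂ y) = 1) :
    q₁ = q₂ := by
  -- d = q₁' - q₂'
  set d : ℝ → ℝ := fun y => deriv q₁ y - deriv q₂ y with hd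
  have hdD : Differentiable ℝ d := hq₁'.sub hq₂'
  have hd' : ∀ y, HasDerivAt d (d y * G y) y := by
    intro y
    have h1 := (hq₁'.differentiableAt (x := y)).hasDerivAt
    have h2 := (hq₂'.differentiableAt (x := y)).hasDerivAt
    have := h1.sub h2
    rw [hode₁ y, hode₂ y] at this
    convert this using 1
    · rfl
    · rfl
    · rfl
    · simp only [hd]; ring
  -- integrating factor
  set Φ : ℝ → ℝ := fun y => Real.exp (-∫ t in y₀..y, G t) with hΦ
  have hΦ' : ∀ y, HasDerivAt Φ (-G y * Φ y) y := by
    intro y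
    have hInt : HasDerivAt (fun u => ∫ t in y₀..u, G t) (G y) y :=
      intervalIntegral.integral_hasDerivAt_right (hG.intervalIntegrable _ _)
        (hG.stronglyMeasurableAtFilter _ _) hG.continuousAt
    have := (hInt.neg).exp
    simpa [hΦ, mul_comm] using this
  set F : ℝ → ℝ := fun y => d y * Φ y with hF
  have hF' : ∀ y, HasDerivAt F 0 y := by
    intro y
    have := (hd' y).mul (hΦ' y)
    convert this using 1
    · rfl
    · rfl
    · rfl
    · ring
  have hFconst : ∀ y, F y = F y₀ := by
    intro y
    exact is_const_of_deriv_eq_zero (fun x => (hF' x).differentiableAt)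
      (fun x => (hF' x).deriv) y y₀
  have hFy₀ : F y₀ = 0 := by
    simp [hF, hd, h0]
  have hd0 : ∀ y, d y = 0 := by
    intro y
    have h := hFconst y
    rw [hFy₀] at h
    have hΦpos : Φ y > 0 := Real.exp_pos _
    have : d y * Φ y = 0 := h
    exact (mul_eq_zero.mp this).resolve_right (ne_of_gt hΦpos)
  -- q₁ - q₂ is constant
  have hdiffconst : ∀ y, q₁ y - q₂ y = q₁ y₀ - q₂ y₀ := by
    intro y
    refine is_const_of_deriv_eq_zero (hq₁.sub hq₂) (fun x => ?_) y y₀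
    rw [deriv_sub (hq₁ x) (hq₂ x)]
    have := hd0 x
    simpa [hd] using this
  set c : ℝ := q₁ y₀ - q₂ y₀ with hc
  have hq1eq : ∀ y, q₁ y = q₂ y + c := by
    intro y; have := hdiffconst y; linarith
  have : (1 : ℝ) = Real.exp c := by
    calc (1 : ℝ) = ∫ y, Real.exp (q₁ y) := hnorm₁.symm
    _ = ∫ y, Real.exp (q₂ y) * Real.exp c := by
        congr 1; funext y; rw [hq1eq y, Real.exp_add]
    _ = (∫ y, Real.exp (q₂ y)) * Real.exp c := by
        rw [integral_mul_const]
    _ = Real.exp c := by rw [hnorm₂, one_mul]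
  have hc0 : c = 0 := by have := congrArg Real.log this; simpa using this.symm
  funext y
  have := hq1eq y
  rw [hc0] at this
  linarith
end

section
/- Suppose π : ℝ² → ℝ satisfies both π(x,y) = ν((y − m(x))/c) + ξ(x) for all (x,y), where ν : ℝ → ℝ is twice differentiable, ξ : ℝ → ℝ is arbitrary, m : ℝ → ℝ is differentiable, and c > 0 is a constant, and π(x,y) = r(x,y) + q(y) for all (x,y), where r : ℝ² → ℝ is twice continuously differentiable and q : ℝ → ℝ is twice differentiable. Then at every point (x,y) with m'(x) ≠ 0, the differential equation −(1/m'(x))·∂²r/∂x∂y(x,y) − ∂²r/∂y²(x,y) = q''(y) holds. -/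
/-- **ANM special case of the identifiability differential equation.**
If the log joint density `π` admits a forward additive-noise decomposition
`π x y = ν ((y - m x)/c) + ξ x` with constant scale `c > 0`, and a backward
decomposition `π x y = r x y + q y`, then at every point with `m' x ≠ 0`:
`-(1/m' x) ∂²r/∂x∂y - ∂²r/∂y² = q'' y`. -/
theorem anm_identifiability_ode
    (π : ℝ → ℝ → ℝ) (ν ξ m q : ℝ → ℝ) (r : ℝ → ℝ → ℝ) (c : ℝ)
    (hν : Differentiable ℝ ν) (hν' : Differentiable ℝ (deriv ν))
    (hm : Differentiable ℝ m) (hc : 0 < c)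
    (hforward : ∀ x y, π x y = ν ((y - m x) / c) + ξ x)
    (hr : ContDiff ℝ 2 (fun p : ℝ × ℝ => r p.1 p.2))
    (hq : Differentiable ℝ q) (hq' : Differentiable ℝ (deriv q))
    (hbackward : ∀ x y, π x y = r x y + q y) :
    ∀ x y, deriv m x ≠ 0 →
      -(1 / deriv m x) * deriv (fun x' => deriv (fun y' => r x' y') y) x
        - deriv (fun y' => deriv (fun y'' => r x y'') y') y
      = deriv (deriv q) y := by
  have hc0 : c ≠ 0 := ne_of_gt hc
  have hrdef : ∀ x y, r x y = ν ((y - m x) / c) + ξ x - q y := by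
    intro x y
    have h1 := hforward x y
    have h2 := hbackward x y
    linarith
  -- first y-derivative of r
  have h1 : ∀ x y, deriv (fun y' => r x y') y
      = deriv ν ((y - m x) / c) * (1 / c) - deriv q y := by
    intro x y
    have hfun : (fun y' => r x y') = fun y' => ν ((y' - m x) / c) + ξ x - q y' := by
      funext y'; exact hrdef x y'
    rw [hfun]
    have hinner : HasDerivAt (fun y' : ℝ => (y' - m x) / c) (1 / c) y := by
      simpa using (((hasDerivAt_id y).sub_const (m x)).div_const c)
    have hcomp : HasDerivAt (fun y' : ℝ => ν ((y' - m x) / c))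
        (deriv ν ((y - m x) / c) * (1 / c)) y :=
      ((hν ((y - m x) / c)).hasDerivAt).comp y hinner
    exact ((hcomp.add_const (ξ x)).sub (hq y).hasDerivAt).deriv
  -- mixed derivative
  intro x y hmx
  have h2 : deriv (fun x' => deriv (fun y' => r x' y') y) x
      = deriv (deriv ν) ((y - m x) / c) * (-(deriv m x) / c) * (1 / c) := by
    have hfun : (fun x' => deriv (fun y' => r x' y') y)
        = fun x' => deriv ν ((y - m x') / c) * (1 / c) - deriv q y := by
      funext x'; exact h1 x' y
    rw [hfun]
    have hinner : HasDerivAt (fun x' : ℝ => (y - m x') / c) (-(deriv m x) / c) x := by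
      simpa using (((hasDerivAt_const x y).sub (hm x).hasDerivAt).div_const c)
    have hcomp : HasDerivAt (fun x' : ℝ => deriv ν ((y - m x') / c))
        (deriv (deriv ν) ((y - m x) / c) * (-(deriv m x) / c)) x :=
      by have hd := (hν' ((y - m x) / c)).hasDerivAt; exact hd.comp x hinner
    exact ((hcomp.mul_const (1 / c)).sub_const (deriv q y)).deriv
  -- second y-derivative
  have h3 : deriv (fun y' => deriv (fun y'' => r x y'') y') y
      = deriv (deriv ν) ((y - m x) / c) * (1 / c) * (1 / c) - deriv (deriv q) y := by
    have hfun : (fun y' => deriv (fun y'' => r x y'') y')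
        = fun y' => deriv ν ((y' - m x) / c) * (1 / c) - deriv q y' := by
      funext y'; exact h1 x y'
    rw [hfun]
    have hinner : HasDerivAt (fun y' : ℝ => (y' - m x) / c) (1 / c) y := by
      simpa using (((hasDerivAt_id y).sub_const (m x)).div_const c)
    have hcomp : HasDerivAt (fun y' : ℝ => deriv ν ((y' - m x) / c))
        (deriv (deriv ν) ((y - m x) / c) * (1 / c)) y :=
      by have hd := (hν' ((y - m x) / c)).hasDerivAt; exact hd.comp y hinner
    exact ((hcomp.mul_const (1 / c)).sub (hq' y).hasDerivAt).deriv
  rw [h2, h3]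
  field_simp
  ring
end

section
/- Let β ≠ 0 and σ_X, σ_ε > 0, and define s² = β²σ_X² + σ_ε², γ = βσ_X²/s², τ² = σ_X²σ_ε²/s². Let r(x,y) = −(x − γy)²/(2τ²) + c₁ and q(y) = −y²/(2s²) + c₂ for constants c₁, c₂, and take m(x) = βx and σ(x) = σ_ε constant, so that Q(x,y) = σ(x)m'(x) + (y − m(x))σ'(x) = σ_ε β and σ'(x) = 0. Then at every point (x,y): −(σ_ε/(σ_ε β))·∂²r/∂x∂y(x,y) − ∂²r/∂y²(x,y) = −1/s² = q''(y), i.e., the identifiability differential equation of the heteroscedastic noise model holds everywhere in the linear Gaussian case. -/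
/-- **The identifiability differential equation holds everywhere in the
linear Gaussian case.** With `m x = βx`, `σ x = σε` constant (so
`Q x y = σε·β` and `σ' x = 0`), `r x y = -(x - γy)²/(2τ²) + c₁` and
`q y = -y²/(2s²) + c₂`, one has
`-(σε/(σε β)) ∂²r/∂x∂y - ∂²r/∂y² = -1/s² = q'' y` at every point. -/
theorem linear_gaussian_satisfies_ode
    (β σX σε s γ τ c₁ c₂ : ℝ)
    (hβ : β ≠ 0) (hσX : 0 < σX) (hσε : 0 < σε)
    (hs : s ^ 2 = β ^ 2 * σX ^ 2 + σε ^ 2) (hs0 : 0 < s)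
    (hγ : γ = β * σX ^ 2 / s ^ 2)
    (hτ : τ ^ 2 = σX ^ 2 * σε ^ 2 / s ^ 2) (hτ0 : 0 < τ)
    (r : ℝ → ℝ → ℝ) (q : ℝ → ℝ)
    (hr : ∀ x y, r x y = -(x - γ * y) ^ 2 / (2 * τ ^ 2) + c₁)
    (hq : ∀ y, q y = -y ^ 2 / (2 * s ^ 2) + c₂) :
    ∀ x y : ℝ,
      -(σε / (σε * β)) * deriv (fun x' => deriv (fun y' => r x' y') y) x
          - deriv (fun y' => deriv (fun y'' => r x y'') y') y
        = -1 / s ^ 2 ∧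
      (-1 / s ^ 2 : ℝ) = deriv (deriv q) y := by
  have hs2 : s ^ 2 ≠ 0 := by positivity
  have hτ2 : τ ^ 2 ≠ 0 := by positivity
  have hσε' : σε ≠ 0 := ne_of_gt hσε
  -- first derivative of r in y
  have hdy : ∀ x y : ℝ, HasDerivAt (fun y' => r x y') (γ * (x - γ * y) / τ ^ 2) y := by
    intro x y
    have h1 : HasDerivAt (fun y' : ℝ => x - γ * y') (0 - γ * 1) y :=
      (hasDerivAt_const y x).sub ((hasDerivAt_id y).const_mul γ)
    have h2 : HasDerivAt (fun y' : ℝ => -(x - γ * y') ^ 2 / (2 * τ ^ 2) + c₁) _ y :=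
      (((h1.pow 2).neg.div_const (2 * τ ^ 2)).add_const c₁)
    have heq : (fun y' : ℝ => -(x - γ * y') ^ 2 / (2 * τ ^ 2) + c₁) = fun y' => r x y' := by
      funext y'; rw [hr]
    rw [heq] at h2
    convert h2 using 1
    field_simp
    ring
  have hdy' : ∀ x : ℝ, (fun y' => deriv (fun y'' => r x y'') y') =
      fun y' => γ * (x - γ * y') / τ ^ 2 := by
    intro x; funext y'; exact (hdy x y').deriv
  intro x y
  constructor
  · -- mixed second derivative
    have hmx : deriv (fun x' => deriv (fun y' => r x' y') y) x = γ / τ ^ 2 := by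
      have heq : (fun x' => deriv (fun y' => r x' y') y) =
          fun x' => γ * (x' - γ * y) / τ ^ 2 := by
        funext x'; exact (hdy x' y).deriv
      rw [heq]
      have h : HasDerivAt (fun x' : ℝ => γ * (x' - γ * y) / τ ^ 2) (γ * 1 / τ ^ 2) x :=
        (((hasDerivAt_id x).sub_const (γ * y)).const_mul γ).div_const (τ ^ 2)
      rw [h.deriv]; ring
    have hyy : deriv (fun y' => deriv (fun y'' => r x y'') y') y = -(γ ^ 2) / τ ^ 2 := by
      rw [hdy' x]
      have h1 : HasDerivAt (fun y' : ℝ => x - γ * y') (0 - γ * 1) y :=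
        (hasDerivAt_const y x).sub ((hasDerivAt_id y).const_mul γ)
      have h : HasDerivAt (fun y' : ℝ => γ * (x - γ * y') / τ ^ 2)
          (γ * (0 - γ * 1) / τ ^ 2) y := (h1.const_mul γ).div_const (τ ^ 2)
      rw [h.deriv]; ring
    rw [hmx, hyy, hγ, hτ, hs]
    have hden : β ^ 2 * σX ^ 2 + σε ^ 2 ≠ 0 := by positivity
    field_simp
    ring
  · -- q'' = -1/s²
    have hq1 : deriv q = fun y' => -y' / s ^ 2 := by
      funext y'
      have h : HasDerivAt (fun y'' : ℝ => -y'' ^ 2 / (2 * s ^ 2) + c₂)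
          (-(2 * y' ^ 1 * 1) / (2 * s ^ 2)) y' :=
        (((hasDerivAt_id y').pow 2).neg.div_const (2 * s ^ 2)).add_const c₂
      have heq : (fun y'' : ℝ => -y'' ^ 2 / (2 * s ^ 2) + c₂) = q := by
        funext z; rw [hq]
      rw [heq] at h
      rw [h.deriv]; field_simp
    rw [hq1]
    have h : HasDerivAt (fun y' : ℝ => -y' / s ^ 2) (-1 / s ^ 2) y := by
      simpa using ((hasDerivAt_id y).neg.div_const (s ^ 2))
    rw [h.deriv]
end
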